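/- Let φ : ℝ^{m×n} → ℝ be any function bounded below and let λ > 0. Then the infimum of the factorized problem equals the infimum of the rank-constrained problem: inf_{U ∈ ℝ^{m×k}, V ∈ ℝ^{n×k}} { (λ/2)(‖U‖_F² + ‖V‖_F²) + φ(U Vᵀ) } = inf_{L ∈ ℝ^{m×n}, rank(L) ≤ k} { λ ‖L‖_* + φ(L) }. -/

import Mathlib

open Matrix

/-- The singular values of a real `m × n` matrix: the nonnegative square roots of the
eigenvalues of the positive semidefinite matrix `Lᵀ L` (indexed by columns). -/
noncomputable def singVals {m n : ℕ} (L : Matrix (Fin m) (Fin n) ℝ) : Fin n → ℝ :=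
  fun i => Real.sqrt ((show (Lᵀ * L).IsHermitian by
    simpa [Matrix.conjTranspose_eq_transpose_of_trivial] using
      Matrix.isHermitian_conjTranspose_mul_self L).eigenvalues i)

/-- The nuclear norm: the sum of the singular values. -/
noncomputable def nuclearNorm {m n : ℕ} (L : Matrix (Fin m) (Fin n) ℝ) : ℝ :=
  ∑ i, singVals L i

/-- The squared Frobenius norm. -/
def frobSq {a b : ℕ} (A : Matrix (Fin a) (Fin b) ℝ) : ℝ :=
  ∑ i, ∑ j, (A i j) ^ 2

theorem Matrix.isHermitian_transpose_mul_self {m n : ℕ} (L : Matrix (Fin m) (Fin n) ℝ) :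
    (Lᵀ * L).IsHermitian := by
  simpa [Matrix.conjTranspose_eq_transpose_of_trivial] using
    Matrix.isHermitian_conjTranspose_mul_self L

namespace NucAux

/-! ### generic matrix helper lemmas -/

variable {a b c d : Type*} [Fintype a] [Fintype b] [Fintype c] [Fintype d]

lemma vecMulVec_mul_vecMulVec (x : a → ℝ) (y : b → ℝ) (z : b → ℝ) (w : c → ℝ) :
    vecMulVec x y * vecMulVec z w = (y ⬝ᵥ z) • vecMulVec x w := by
  ext i j
  simp only [mul_apply, vecMulVec_apply, Matrix.smul_apply, smul_eq_mul, dotProduct,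
    Finset.sum_mul, Finset.mul_sum]
  exact Finset.sum_congr rfl fun k _ => by ring

lemma mul_vecMulVec (A : Matrix a b ℝ) (x : b → ℝ) (y : c → ℝ) :
    A * vecMulVec x y = vecMulVec (A *ᵥ x) y := by
  ext i j
  simp only [mul_apply, vecMulVec_apply, mulVec, dotProduct, Finset.sum_mul]
  exact Finset.sum_congr rfl fun k _ => by ring

lemma vecMulVec_transpose (x : a → ℝ) (y : b → ℝ) :
    (vecMulVec x y)ᵀ = vecMulVec y x := by
  ext i j; simp [vecMulVec_apply, mul_comm]

lemma trace_vecMulVec (x : a → ℝ) (y : a → ℝ) :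
    trace (vecMulVec x y) = x ⬝ᵥ y := by
  simp [trace, vecMulVec_apply, dotProduct, diag]

lemma frobSq_eq_trace {p q : ℕ} (A : Matrix (Fin p) (Fin q) ℝ) :
    frobSq A = trace (Aᵀ * A) := by
  rw [frobSq, trace]
  rw [Finset.sum_comm]
  refine Finset.sum_congr rfl fun j _ => ?_
  simp [mul_apply, diag, sq]

lemma frobSq_nonneg {p q : ℕ} (A : Matrix (Fin p) (Fin q) ℝ) : 0 ≤ frobSq A :=
  Finset.sum_nonneg fun _ _ => Finset.sum_nonneg fun _ _ => sq_nonneg _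

lemma dotProduct_le_half (x y : a → ℝ) :
    x ⬝ᵥ y ≤ (x ⬝ᵥ x + y ⬝ᵥ y) / 2 := by
  have h : 0 ≤ (x - y) ⬝ᵥ (x - y) :=
    Finset.sum_nonneg fun _ _ => mul_self_nonneg _
  have e : (x - y) ⬝ᵥ (x - y) = x ⬝ᵥ x - 2 * (x ⬝ᵥ y) + y ⬝ᵥ y := by
    simp [sub_dotProduct, dotProduct_sub, dotProduct_comm y x]
    ring
  linarith [e ▸ h]



section Spectral

set_option linter.unusedSectionVars false

variable {m n : ℕ} (L : Matrix (Fin m) (Fin n) ℝ)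

noncomputable def mu : Fin n → ℝ :=
  (Matrix.isHermitian_transpose_mul_self L).eigenvalues

noncomputable def Wm : Matrix (Fin n) (Fin n) ℝ :=
  ((Matrix.isHermitian_transpose_mul_self L).eigenvectorUnitary : Matrix (Fin n) (Fin n) ℝ)

noncomputable def wv (i : Fin n) : Fin n → ℝ := fun a => Wm L a i

noncomputable def uv (i : Fin n) : Fin m → ℝ := (singVals L i)⁻¹ • (L *ᵥ wv L i)

lemma mu_nonneg (i : Fin n) : 0 ≤ mu L i :=
  Matrix.eigenvalues_conjTranspose_mul_self_nonneg L i

lemma sq_sig (i : Fin n) : singVals L i ^ 2 = mu L i :=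
  Real.sq_sqrt (mu_nonneg L i)

lemma sig_nonneg (i : Fin n) : 0 ≤ singVals L i := Real.sqrt_nonneg _

lemma star_Wm : star (Wm L) = (Wm L)ᵀ := by
  rw [Matrix.star_eq_conjTranspose, Matrix.conjTranspose_eq_transpose_of_trivial]

lemma WtW : (Wm L)ᵀ * Wm L = 1 := by
  rw [← star_Wm]
  exact Matrix.mem_unitaryGroup_iff'.mp
    ((Matrix.isHermitian_transpose_mul_self L).eigenvectorUnitary).2

lemma WWt : Wm L * (Wm L)ᵀ = 1 := by
  rw [← star_Wm]
  exact Matrix.mem_unitaryGroup_iff.mp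
    ((Matrix.isHermitian_transpose_mul_self L).eigenvectorUnitary).2

lemma spec : Lᵀ * L = Wm L * Matrix.diagonal (mu L) * (Wm L)ᵀ := by
  have h := (Matrix.isHermitian_transpose_mul_self L).spectral_theorem
  rw [← Matrix.conjTranspose_eq_transpose_of_trivial L, ← star_Wm]
  rw [RCLike.ofReal_real_eq_id] at h
  exact h

lemma w_dot_w (i j : Fin n) : wv L i ⬝ᵥ wv L j = if i = j then 1 else 0 := by
  have h := congrFun (congrFun (WtW L) i) j
  simp only [Matrix.mul_apply, Matrix.transpose_apply, Matrix.one_apply] at h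
  simpa [dotProduct, wv] using h

lemma w_single (i : Fin n) : wv L i = Wm L *ᵥ Pi.single i 1 := by
  ext a
  simp [wv, Matrix.mulVec_single]

lemma eig (j : Fin n) : (Lᵀ * L) *ᵥ wv L j = mu L j • wv L j := by
  rw [spec, w_single]
  rw [← Matrix.mulVec_mulVec, ← Matrix.mulVec_mulVec]
  have h1 : (Wm L)ᵀ *ᵥ (Wm L *ᵥ Pi.single j 1) = Pi.single j 1 := by
    rw [Matrix.mulVec_mulVec, WtW, Matrix.one_mulVec]
  rw [h1, Matrix.diagonal_mulVec_single, mul_one]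
  ext a
  simp [Matrix.mulVec, dotProduct, Pi.single_apply, mul_ite, mul_comm]

lemma Lw_dot_Lw (i j : Fin n) :
    (L *ᵥ wv L i) ⬝ᵥ (L *ᵥ wv L j) = if i = j then mu L j else 0 := by
  rw [dotProduct_mulVec, Matrix.vecMul_mulVec]
  have hsym : (Lᵀ * L)ᵀ = Lᵀ * L := by
    rw [Matrix.transpose_mul, Matrix.transpose_transpose]
  rw [← hsym, Matrix.vecMul_transpose, eig]
  rw [smul_dotProduct, w_dot_w]
  by_cases hij : i = j
  · subst hij; simp
  · simp [hij]

lemma Lw_zero (i : Fin n) (h : singVals L i = 0) : L *ᵥ wv L i = 0 := by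
  have h2 := Lw_dot_Lw L i i
  simp only [if_pos rfl] at h2
  have : mu L i = 0 := by
    have := sq_sig L i; rw [h] at this; simpa using this.symm
  rw [this] at h2
  exact dotProduct_self_eq_zero.mp h2

lemma Lw_eq (i : Fin n) : L *ᵥ wv L i = singVals L i • uv L i := by
  by_cases h : singVals L i = 0
  · rw [Lw_zero L i h, h, zero_smul]
  · rw [uv, smul_smul, mul_inv_cancel₀ h, one_smul]

lemma u_dot_u (i j : Fin n) :
    uv L i ⬝ᵥ uv L j = if i = j ∧ singVals L i ≠ 0 then 1 else 0 := by
  rw [uv, uv, smul_dotProduct, dotProduct_smul, Lw_dot_Lw]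
  by_cases hij : i = j
  · subst hij
    by_cases h : singVals L i = 0
    · simp [h]
    · have hmu : mu L i = singVals L i ^ 2 := (sq_sig L i).symm
      simp only [if_pos rfl, hmu, smul_eq_mul, h, not_false_iff, and_self, if_true, and_true]
      field_simp
      rw [if_pos ⟨trivial, h⟩]
  · simp [hij]

lemma sig_eq_dot (i : Fin n) : singVals L i = uv L i ⬝ᵥ (L *ᵥ wv L i) := by
  rw [Lw_eq, dotProduct_smul, u_dot_u]
  by_cases h : singVals L i = 0
  · simp [h]
  · simp [h]

lemma L_rep : L = ∑ i, singVals L i • vecMulVec (uv L i) (wv L i) := by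
  have hW : Wm L * (Wm L)ᵀ = ∑ i, vecMulVec (wv L i) (wv L i) := by
    ext a b
    simp only [Matrix.mul_apply, Matrix.transpose_apply, Matrix.sum_apply, vecMulVec_apply, wv]
  calc L = L * (Wm L * (Wm L)ᵀ) := by rw [WWt, Matrix.mul_one]
    _ = ∑ i, L * vecMulVec (wv L i) (wv L i) := by rw [hW, Matrix.mul_sum]
    _ = ∑ i, vecMulVec (L *ᵥ wv L i) (wv L i) := by
        exact Finset.sum_congr rfl fun i _ => mul_vecMulVec L _ _
    _ = ∑ i, singVals L i • vecMulVec (uv L i) (wv L i) := by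
        refine Finset.sum_congr rfl fun i _ => ?_
        rw [Lw_eq]
        ext a b
        simp [vecMulVec_apply]
        ring

lemma trace_vecMulVec_mul {p q : Type*} [Fintype p] [Fintype q] (a : p → ℝ) (b : q → ℝ)
    (B : Matrix q p ℝ) : trace (vecMulVec a b * B) = b ⬝ᵥ (B *ᵥ a) := by
  simp only [trace, diag, mul_apply, vecMulVec_apply, dotProduct, Matrix.mulVec,
    Finset.mul_sum]
  rw [Finset.sum_comm]
  exact Finset.sum_congr rfl fun i _ => Finset.sum_congr rfl fun j _ => by ring

lemma bessel {p m k : ℕ} (U : Matrix (Fin m) (Fin k) ℝ) (u : Fin p → Fin m → ℝ)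
    (P : Fin p → Prop) [DecidablePred P]
    (horth : ∀ i j, u i ⬝ᵥ u j = if i = j ∧ P i then 1 else 0)
    (hzero : ∀ i, ¬ P i → u i = 0) :
    ∑ i, (Uᵀ *ᵥ u i) ⬝ᵥ (Uᵀ *ᵥ u i) ≤ frobSq U := by
  set B : Matrix (Fin m) (Fin m) ℝ := U * Uᵀ with hB
  set N : Matrix (Fin m) (Fin m) ℝ := ∑ i, vecMulVec (u i) (u i) with hN
  have hNN : N * N = N := by
    rw [hN, Finset.sum_mul_sum]
    have key : ∀ i ∈ Finset.univ, ∑ j ∈ Finset.univ,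
        vecMulVec (u i) (u i) * vecMulVec (u j) (u j) = vecMulVec (u i) (u i) := by
      intro i _
      have : ∀ j, vecMulVec (u i) (u i) * vecMulVec (u j) (u j)
          = (u i ⬝ᵥ u j) • vecMulVec (u i) (u j) := fun j => vecMulVec_mul_vecMulVec _ _ _ _
      rw [Finset.sum_congr rfl fun j _ => this j]
      rw [Finset.sum_eq_single i]
      · by_cases hP : P i
        · rw [horth]; simp [hP]
        · rw [hzero i hP]
          ext a b
          simp [vecMulVec_apply]
      · intro j _ hj
        rw [horth]; simp [Ne.symm hj]
      · simp
    rw [Finset.sum_congr rfl key]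
  have hNt : Nᵀ = N := by
    rw [hN, Matrix.transpose_sum]
    exact Finset.sum_congr rfl fun i _ => vecMulVec_transpose _ _
  have hlhs : ∑ i, (Uᵀ *ᵥ u i) ⬝ᵥ (Uᵀ *ᵥ u i) = trace (N * B) := by
    rw [hN, Matrix.sum_mul, trace_sum]
    refine Finset.sum_congr rfl fun i _ => ?_
    rw [trace_vecMulVec_mul, dotProduct_mulVec, Matrix.dotProduct_mulVec,
      Matrix.vecMul_mulVec, Matrix.transpose_transpose]
  have hfU : frobSq U = trace B := by
    rw [hB, frobSq_eq_trace, trace_mul_comm]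
  set Pm : Matrix (Fin m) (Fin m) ℝ := 1 - N with hPm
  have hPP : Pm * Pm = Pm := by
    rw [hPm, Matrix.sub_mul, Matrix.mul_sub, Matrix.mul_sub, hNN]
    simp only [Matrix.one_mul, Matrix.mul_one]
    abel
  have hPt : Pmᵀ = Pm := by rw [hPm, Matrix.transpose_sub, Matrix.transpose_one, hNt]
  have hpos : 0 ≤ trace (Pm * B) := by
    have e1 : Pm * U * (Pm * U)ᵀ = (Pm * U * Uᵀ) * Pm := by
      rw [Matrix.transpose_mul, hPt, ← Matrix.mul_assoc]
    have e2 : trace ((Pm * U * Uᵀ) * Pm) = trace (Pm * (Pm * U * Uᵀ)) := trace_mul_comm _ _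
    have e3 : Pm * (Pm * U * Uᵀ) = Pm * U * Uᵀ := by
      rw [← Matrix.mul_assoc, ← Matrix.mul_assoc, hPP]
    have e4 : Pm * B = Pm * U * Uᵀ := by rw [hB, ← Matrix.mul_assoc]
    have h2 : trace (Pm * B) = trace ((Pm * U) * (Pm * U)ᵀ) := by rw [e4, e1, e2, e3]
    rw [h2, trace_mul_comm, ← frobSq_eq_trace]
    exact frobSq_nonneg _
  have : trace (Pm * B) = trace B - trace (N * B) := by
    rw [hPm, Matrix.sub_mul, trace_sub, Matrix.one_mul]
  rw [hlhs, hfU]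
  linarith [this ▸ hpos]

lemma sumB {p k : ℕ} (V : Matrix (Fin p) (Fin k) ℝ) (W : Matrix (Fin p) (Fin p) ℝ)
    (hW : W * Wᵀ = 1) :
    ∑ i, (Vᵀ *ᵥ (fun a => W a i)) ⬝ᵥ (Vᵀ *ᵥ (fun a => W a i)) = frobSq V := by
  have h1 : ∀ i, (Vᵀ *ᵥ (fun a => W a i)) ⬝ᵥ (Vᵀ *ᵥ (fun a => W a i))
      = ∑ j, ((Vᵀ * W) j i) ^ 2 := by
    intro i
    simp only [dotProduct, Matrix.mulVec, Matrix.mul_apply, sq, Matrix.transpose_apply]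
  rw [Finset.sum_congr rfl fun i _ => h1 i, Finset.sum_comm]
  have h2 : frobSq (Vᵀ * W) = ∑ j, ∑ i, ((Vᵀ * W) j i) ^ 2 := rfl
  rw [← h2]
  have h3 : (Vᵀ * W) * (Vᵀ * W)ᵀ = Vᵀ * (W * Wᵀ) * V := by
    rw [Matrix.transpose_mul, Matrix.transpose_transpose]
    simp only [Matrix.mul_assoc]
  calc frobSq (Vᵀ * W) = trace ((Vᵀ * W)ᵀ * (Vᵀ * W)) := frobSq_eq_trace _
    _ = trace ((Vᵀ * W) * (Vᵀ * W)ᵀ) := trace_mul_comm _ _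
    _ = trace (Vᵀ * V) := by rw [h3, hW, Matrix.mul_one]
    _ = frobSq V := (frobSq_eq_trace V).symm

lemma u_zero (i : Fin n) (h : singVals L i = 0) : uv L i = 0 := by
  rw [uv, h, _root_.inv_zero, zero_smul]

lemma sig_ne_zero_iff (i : Fin n) : singVals L i ≠ 0 ↔ mu L i ≠ 0 := by
  constructor
  · intro h hmu
    exact h (by rw [singVals, mu] at *; rw [show (Matrix.isHermitian_transpose_mul_self L).eigenvalues i = 0 from hmu, Real.sqrt_zero])
  · intro h hs
    exact h (by rw [← sq_sig L i, hs, zero_pow two_ne_zero])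

lemma rank_eq_card : L.rank = Fintype.card {i // mu L i ≠ 0} := by
  classical
  have hdetW : IsUnit (Wm L).det := by
    have h := congrArg Matrix.det (WWt L)
    rw [Matrix.det_mul, Matrix.det_one] at h
    exact isUnit_iff_exists_inv.mpr ⟨_, h⟩
  have hdetWt : IsUnit (Wm L)ᵀ.det := by rw [Matrix.det_transpose]; exact hdetW
  have h1 : L.rank = (Lᵀ * L).rank := (Matrix.rank_transpose_mul_self L).symm
  rw [h1, spec, Matrix.mul_assoc,
    Matrix.rank_mul_eq_right_of_isUnit_det _ _ hdetW,
    Matrix.rank_mul_eq_left_of_isUnit_det _ _ hdetWt,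
    Matrix.rank_diagonal]

end Spectral



lemma nuclearNorm_factor_le {m n k : ℕ} (U : Matrix (Fin m) (Fin k) ℝ)
    (V : Matrix (Fin n) (Fin k) ℝ) :
    nuclearNorm (U * Vᵀ) ≤ (frobSq U + frobSq V) / 2 := by
  classical
  set Lm := U * Vᵀ with hLm
  have key : ∀ i, singVals Lm i = (Uᵀ *ᵥ uv Lm i) ⬝ᵥ (Vᵀ *ᵥ wv Lm i) := by
    intro i
    rw [sig_eq_dot]
    rw [show Lm *ᵥ wv Lm i = U *ᵥ (Vᵀ *ᵥ wv Lm i) from (Matrix.mulVec_mulVec _ _ _).symm]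
    rw [Matrix.dotProduct_mulVec, Matrix.mulVec_transpose, Matrix.mulVec_transpose]
  have hsum : nuclearNorm Lm ≤
      ((∑ i, (Uᵀ *ᵥ uv Lm i) ⬝ᵥ (Uᵀ *ᵥ uv Lm i)) +
        ∑ i, (Vᵀ *ᵥ wv Lm i) ⬝ᵥ (Vᵀ *ᵥ wv Lm i)) / 2 := by
    rw [nuclearNorm]
    calc ∑ i, singVals Lm i
        ≤ ∑ i, ((Uᵀ *ᵥ uv Lm i) ⬝ᵥ (Uᵀ *ᵥ uv Lm i)
            + (Vᵀ *ᵥ wv Lm i) ⬝ᵥ (Vᵀ *ᵥ wv Lm i)) / 2 :=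
          Finset.sum_le_sum fun i _ => by rw [key i]; exact dotProduct_le_half _ _
      _ = ((∑ i, (Uᵀ *ᵥ uv Lm i) ⬝ᵥ (Uᵀ *ᵥ uv Lm i)) +
            ∑ i, (Vᵀ *ᵥ wv Lm i) ⬝ᵥ (Vᵀ *ᵥ wv Lm i)) / 2 := by
          rw [← Finset.sum_div, Finset.sum_add_distrib]
  have hb : ∑ i, (Uᵀ *ᵥ uv Lm i) ⬝ᵥ (Uᵀ *ᵥ uv Lm i) ≤ frobSq U :=
    bessel U (uv Lm) (fun i => singVals Lm i ≠ 0) (u_dot_u Lm)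
      (fun i h => u_zero Lm i (not_not.mp h))
  have hw : ∑ i, (Vᵀ *ᵥ wv Lm i) ⬝ᵥ (Vᵀ *ᵥ wv Lm i) = frobSq V :=
    sumB V (Wm Lm) (WWt Lm)
  linarith


lemma sum_smul_vecMulVec_mul {ι κ : Type*} [Fintype ι] [Fintype κ] {a b c : ℕ}
    (f : ι → ℝ) (g : κ → ℝ) (x : ι → Fin a → ℝ) (y : ι → Fin b → ℝ)
    (z : κ → Fin b → ℝ) (t : κ → Fin c → ℝ) :
    (∑ j, f j • vecMulVec (x j) (y j)) * (∑ j', g j' • vecMulVec (z j') (t j')) =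
      ∑ j, ∑ j', (f j * g j' * (y j ⬝ᵥ z j')) • vecMulVec (x j) (t j') := by
  rw [Matrix.sum_mul]
  refine Finset.sum_congr rfl fun j _ => ?_
  rw [Matrix.mul_sum]
  refine Finset.sum_congr rfl fun j' _ => ?_
  rw [Matrix.smul_mul, Matrix.mul_smul, vecMulVec_mul_vecMulVec, smul_smul, smul_smul,
    mul_assoc]

lemma sum_subtype_eq_full {n : ℕ} (L : Matrix (Fin m) (Fin n) ℝ) {M : Type*}
    [AddCommMonoid M] (f : Fin n → M) (hf : ∀ i, mu L i = 0 → f i = 0) :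
    ∑ j : {i // mu L i ≠ 0}, f j.1 = ∑ i, f i := by
  classical
  rw [← Finset.sum_subtype (Finset.univ.filter fun i => mu L i ≠ 0)
    (by simp) f]
  exact Finset.sum_filter_of_ne fun x _ hx => fun h0 => hx (hf x h0)

lemma trace_double_sum {ι κ : Type*} [Fintype ι] [Fintype κ] {a : ℕ}
    (c : ι → κ → ℝ) (x : ι → Fin a → ℝ) (t : κ → Fin a → ℝ) :
    trace (∑ j, ∑ j', (c j j') • vecMulVec (x j) (t j'))
      = ∑ j, ∑ j', c j j' * (x j ⬝ᵥ t j') := by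
  rw [trace_sum]
  refine Finset.sum_congr rfl fun j _ => ?_
  rw [trace_sum]
  refine Finset.sum_congr rfl fun j' _ => ?_
  rw [trace_smul, trace_vecMulVec, smul_eq_mul]

lemma exists_factor {m n k : ℕ} (L : Matrix (Fin m) (Fin n) ℝ) (h : L.rank ≤ k) :
    ∃ (U : Matrix (Fin m) (Fin k) ℝ) (V : Matrix (Fin n) (Fin k) ℝ),
      U * Vᵀ = L ∧ frobSq U = nuclearNorm L ∧ frobSq V = nuclearNorm L := by
  classical
  have hcard : Fintype.card {i // mu L i ≠ 0} ≤ Fintype.card (Fin k) := by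
    rw [Fintype.card_fin, ← rank_eq_card]; exact h
  obtain ⟨e⟩ := Function.Embedding.nonempty_of_card_le hcard
  have hsig : ∀ j : {i // mu L i ≠ 0}, singVals L j.1 ≠ 0 :=
    fun j => (sig_ne_zero_iff L j.1).mpr j.2
  have hsingle : ∀ j j' : {i // mu L i ≠ 0},
      (Pi.single (e j) 1 : Fin k → ℝ) ⬝ᵥ Pi.single (e j') 1 = if j = j' then 1 else 0 := by
    intro j j'
    rw [single_dotProduct, one_mul, Pi.single_apply]
    simp [EmbeddingLike.apply_eq_iff_eq, eq_comm]
  have huu : ∀ j j' : {i // mu L i ≠ 0},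
      uv L j.1 ⬝ᵥ uv L j'.1 = if j = j' then 1 else 0 := by
    intro j j'
    rw [u_dot_u]
    by_cases hjj : j = j'
    · simp [hjj, hsig j']
    · have : j.1 ≠ j'.1 := fun hh => hjj (Subtype.ext hh)
      simp [this, hjj]
  have hww : ∀ j j' : {i // mu L i ≠ 0},
      wv L j.1 ⬝ᵥ wv L j'.1 = if j = j' then 1 else 0 := by
    intro j j'
    rw [w_dot_w]
    by_cases hjj : j = j'
    · simp [hjj]
    · have : j.1 ≠ j'.1 := fun hh => hjj (Subtype.ext hh)
      simp [this, hjj]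
  set sq : {i // mu L i ≠ 0} → ℝ := fun j => Real.sqrt (singVals L j.1) with hsq
  set UU : Matrix (Fin m) (Fin k) ℝ :=
    ∑ j : {i // mu L i ≠ 0}, sq j • vecMulVec (uv L j.1) (Pi.single (e j) 1) with hUU
  set VV : Matrix (Fin n) (Fin k) ℝ :=
    ∑ j : {i // mu L i ≠ 0}, sq j • vecMulVec (wv L j.1) (Pi.single (e j) 1) with hVV
  have hsqsq : ∀ j : {i // mu L i ≠ 0}, sq j * sq j = singVals L j.1 :=
    fun j => Real.mul_self_sqrt (sig_nonneg L j.1)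
  have hUt : UUᵀ = ∑ j : {i // mu L i ≠ 0}, sq j • vecMulVec (Pi.single (e j) 1) (uv L j.1) := by
    rw [hUU, Matrix.transpose_sum]
    exact Finset.sum_congr rfl fun j _ => by
      rw [Matrix.transpose_smul, vecMulVec_transpose]
  have hVt : VVᵀ = ∑ j : {i // mu L i ≠ 0}, sq j • vecMulVec (Pi.single (e j) 1) (wv L j.1) := by
    rw [hVV, Matrix.transpose_sum]
    exact Finset.sum_congr rfl fun j _ => by
      rw [Matrix.transpose_smul, vecMulVec_transpose]
  have hsig0 : ∀ i, mu L i = 0 → singVals L i = 0 := by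
    intro i h0
    rw [singVals, show (Matrix.isHermitian_transpose_mul_self L).eigenvalues i = 0 from h0,
      Real.sqrt_zero]
  have hnuc : nuclearNorm L = ∑ j : {i // mu L i ≠ 0}, singVals L j.1 :=
    (sum_subtype_eq_full L (fun i => singVals L i) hsig0).symm
  refine ⟨UU, VV, ?_, ?_, ?_⟩
  · -- U * Vᵀ = L
    rw [hVt, hUU, sum_smul_vecMulVec_mul]
    have hcollapse : ∀ j : {i // mu L i ≠ 0},
        ∑ j' : {i // mu L i ≠ 0}, (sq j * sq j' * ((Pi.single (e j) 1 : Fin k → ℝ) ⬝ᵥ Pi.single (e j') 1)) •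
            vecMulVec (uv L j.1) (wv L j'.1)
          = singVals L j.1 • vecMulVec (uv L j.1) (wv L j.1) := by
      intro j
      rw [Finset.sum_eq_single j]
      · rw [hsingle j j, if_pos rfl, mul_one, hsqsq]
      · intro j' _ hj'
        rw [hsingle j j', if_neg (Ne.symm hj'), mul_zero, zero_smul]
      · simp
    rw [Finset.sum_congr rfl fun j _ => hcollapse j]
    rw [sum_subtype_eq_full L (fun i => singVals L i • vecMulVec (uv L i) (wv L i))
      (fun i h0 => by
        show singVals L i • vecMulVec (uv L i) (wv L i) = 0
        rw [hsig0 i h0, zero_smul])]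
    exact (L_rep L).symm
  · -- frobSq UU
    rw [frobSq_eq_trace, hUt, hUU, sum_smul_vecMulVec_mul, trace_double_sum, hnuc]
    refine Finset.sum_congr rfl fun j _ => ?_
    rw [Finset.sum_eq_single j]
    · rw [huu j j, if_pos rfl, mul_one, hsqsq, hsingle j j, if_pos rfl, mul_one]
    · intro j' _ hj'
      rw [huu j j', if_neg (Ne.symm hj'), mul_zero, zero_mul]
    · simp
  · -- frobSq VV
    rw [frobSq_eq_trace, hVt, hVV, sum_smul_vecMulVec_mul, trace_double_sum, hnuc]
    refine Finset.sum_congr rfl fun j _ => ?_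
    rw [Finset.sum_eq_single j]
    · rw [hww j j, if_pos rfl, mul_one, hsqsq, hsingle j j, if_pos rfl, mul_one]
    · intro j' _ hj'
      rw [hww j j', if_neg (Ne.symm hj'), mul_zero, zero_mul]
    · simp

end NucAux


open NucAux

/-- For any `φ` bounded below and `λ > 0`, the infimum of the factorized problem
`inf_{U,V} (λ/2)(‖U‖_F² + ‖V‖_F²) + φ(U Vᵀ)` equals the infimum of the rank-constrained
problem `inf_{rank L ≤ k} λ‖L‖_* + φ(L)`. -/
theorem factored_inf_eq_rank_constrained_inf (m n k : ℕ)
    (φ : Matrix (Fin m) (Fin n) ℝ → ℝ) (hφ : BddBelow (Set.range φ))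
    (lam : ℝ) (hlam : 0 < lam) :
    (⨅ p : Matrix (Fin m) (Fin k) ℝ × Matrix (Fin n) (Fin k) ℝ,
        (lam / 2 * (frobSq p.1 + frobSq p.2) + φ (p.1 * p.2ᵀ)))
      = ⨅ L : {L : Matrix (Fin m) (Fin n) ℝ // L.rank ≤ k},
          (lam * nuclearNorm L.1 + φ L.1) := by
  obtain ⟨c, hc⟩ := hφ
  have hcφ : ∀ M, c ≤ φ M := fun M => hc ⟨M, rfl⟩
  have hnucnn : ∀ M : Matrix (Fin m) (Fin n) ℝ, 0 ≤ nuclearNorm M :=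
    fun M => Finset.sum_nonneg fun i _ => sig_nonneg M i
  have hbddf : BddBelow (Set.range fun p : Matrix (Fin m) (Fin k) ℝ × Matrix (Fin n) (Fin k) ℝ =>
      lam / 2 * (frobSq p.1 + frobSq p.2) + φ (p.1 * p.2ᵀ)) := by
    refine ⟨c, ?_⟩
    rintro y ⟨p, rfl⟩
    have h1 : 0 ≤ lam / 2 * (frobSq p.1 + frobSq p.2) :=
      mul_nonneg (by linarith) (by linarith [frobSq_nonneg p.1, frobSq_nonneg p.2])
    have := hcφ (p.1 * p.2ᵀ)
    dsimp only
    linarith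
  have hbddg : BddBelow (Set.range fun L : {L : Matrix (Fin m) (Fin n) ℝ // L.rank ≤ k} =>
      lam * nuclearNorm L.1 + φ L.1) := by
    refine ⟨c, ?_⟩
    rintro y ⟨L, rfl⟩
    have h1 : 0 ≤ lam * nuclearNorm L.1 := mul_nonneg hlam.le (hnucnn _)
    have := hcφ L.1
    dsimp only
    linarith
  haveI : Nonempty {L : Matrix (Fin m) (Fin n) ℝ // L.rank ≤ k} :=
    ⟨⟨0, by rw [Matrix.rank_zero]; exact Nat.zero_le k⟩⟩
  apply le_antisymm
  · refine le_ciInf fun L => ?_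
    obtain ⟨U, V, hUV, hU, hV⟩ := exists_factor L.1 L.2
    refine ciInf_le_of_le hbddf (U, V) ?_
    show lam / 2 * (frobSq U + frobSq V) + φ (U * Vᵀ) ≤ lam * nuclearNorm L.1 + φ L.1
    rw [hU, hV, hUV]
    exact le_of_eq (by ring)
  · refine le_ciInf fun p => ?_
    have hrank : (p.1 * p.2ᵀ).rank ≤ k :=
      le_trans (Matrix.rank_mul_le_left _ _) (Matrix.rank_le_width p.1)
    refine ciInf_le_of_le hbddg ⟨p.1 * p.2ᵀ, hrank⟩ ?_
    show lam * nuclearNorm (p.1 * p.2ᵀ) + φ (p.1 * p.2ᵀ)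
      ≤ lam / 2 * (frobSq p.1 + frobSq p.2) + φ (p.1 * p.2ᵀ)
    have hnn := nuclearNorm_factor_le p.1 p.2
    have h3 := mul_le_mul_of_nonneg_left hnn hlam.le
    have h2 : lam * ((frobSq p.1 + frobSq p.2) / 2)
        = lam / 2 * (frobSq p.1 + frobSq p.2) := by ring
    linarith
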